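/- Let x_i^♮ ∈ R^n with atomic sets A_i (i = 1,…,k) be β-incoherent for some β ∈ (0,1], i.e., for each i, cos∠(−D_i, Σ_{j≠i} D_j) ≤ 1 − β where D_i = D(A_i, x_i^♮). Suppose x_i^* satisfy x_i^* − x_i^♮ ∈ D_i for each i. Then for every i, ‖x_i^* − x_i^♮‖ ≤ ‖Σ_{j=1}^k (x_j^* − x_j^♮)‖ / √β. -/

import Mathlib

/- With `εᵢ = xᵢ* - xᵢ♮` and `ε₋ᵢ = Σ_{j≠i} εⱼ`, the angle condition applied to the normalised
vectors `-εᵢ/‖εᵢ‖ ∈ -Dᵢ` and `ε₋ᵢ/‖ε₋ᵢ‖ ∈ Σ_{j≠i} Dⱼ` gives `-⟪εᵢ, ε₋ᵢ⟫ ≤ (1 - β)‖εᵢ‖‖ε₋ᵢ‖`.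
Expanding `‖εᵢ + ε₋ᵢ‖²` with this bound leaves `β‖εᵢ‖²` plus the nonnegative remainder
`(1 - β)(‖εᵢ‖ - ‖ε₋ᵢ‖)² + β‖ε₋ᵢ‖²`. -/

open scoped Pointwise

open MeasureTheory ProbabilityTheory Set
open scoped RealInnerProductSpace

noncomputable def stdGaussian (n : ℕ) : Measure (EuclideanSpace ℝ (Fin n)) :=
  Measure.map (EuclideanSpace.equiv (Fin n) ℝ).symm
    (Measure.pi fun _ : Fin n => gaussianReal 0 1)

/-- Statistical dimension via the sup formulation
`δ(K) = E[(sup{⟪g,y⟫ : y ∈ K ∩ Bⁿ})²]`. -/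
noncomputable def statDim {n : ℕ} (K : Set (EuclideanSpace ℝ (Fin n))) : ℝ :=
  ∫ g, (sSup {r : ℝ | ∃ y, y ∈ K ∧ ‖y‖ ≤ 1 ∧ r = ⟪g, y⟫}) ^ 2 ∂(stdGaussian n)

/-- Gauge of an atomic set: `γ_A(x) = inf{λ ≥ 0 : x ∈ λ·conv(A ∪ {0})}`. -/
noncomputable def agauge {n : ℕ} (A : Set (EuclideanSpace ℝ (Fin n)))
    (x : EuclideanSpace ℝ (Fin n)) : ℝ :=
  gauge (convexHull ℝ (insert 0 A)) x

/-- Descent cone `D(A,x) = cone{d : γ_A(x+d) ≤ γ_A(x)}`. -/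
def descCone {n : ℕ} (A : Set (EuclideanSpace ℝ (Fin n))) (x : EuclideanSpace ℝ (Fin n)) :
    Set (EuclideanSpace ℝ (Fin n)) :=
  {d | ∃ c : ℝ, ∃ s, 0 ≤ c ∧ agauge A (x + s) ≤ agauge A x ∧ d = c • s}

lemma descCone_smul_mem {n : ℕ} {A : Set (EuclideanSpace ℝ (Fin n))}
    {x d : EuclideanSpace ℝ (Fin n)} (hd : d ∈ descCone A x) {t : ℝ} (ht : 0 ≤ t) :
    t • d ∈ descCone A x := by
  obtain ⟨c, s, hc, hg, rfl⟩ := hd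
  exact ⟨t * c, s, mul_nonneg ht hc, hg, (mul_smul t c s).symm⟩

lemma Set.smul_mem_finsetSum {ι R M : Type*} [AddCommMonoid M] [DistribSMul R M]
    {s : Finset ι} {K : ι → Set M} {t : R} (hK : ∀ j ∈ s, ∀ x ∈ K j, t • x ∈ K j)
    {v : M} (hv : v ∈ ∑ j ∈ s, K j) : t • v ∈ ∑ j ∈ s, K j := by
  obtain ⟨g, hg, rfl⟩ := (Set.mem_finsetSum _ _ _).1 hv
  exact (Set.mem_finsetSum _ _ _).2
    ⟨fun j => t • g j, fun hj => hK _ hj _ (hg hj), Finset.smul_sum.symm⟩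

section InnerProduct

variable {E : Type*} [NormedAddCommGroup E] [InnerProductSpace ℝ E]

lemma inner_le_mul_norm_mul_norm_of_forall_norm_eq_one {K K' : Set E} {c : ℝ}
    (hK : ∀ t : ℝ, 0 ≤ t → ∀ x ∈ K, t • x ∈ K) (hK' : ∀ t : ℝ, 0 ≤ t → ∀ x ∈ K', t • x ∈ K')
    (h : ∀ u v, u ∈ K → v ∈ K' → ‖u‖ = 1 → ‖v‖ = 1 → ⟪u, v⟫ ≤ c)
    {u v : E} (hu : u ∈ K) (hv : v ∈ K') : ⟪u, v⟫ ≤ c * (‖u‖ * ‖v‖) := by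
  rcases eq_or_ne u 0 with rfl | hu0
  · simp
  rcases eq_or_ne v 0 with rfl | hv0
  · simp
  have hunit := h _ _ (hK _ (inv_nonneg.mpr (norm_nonneg u)) u hu)
    (hK' _ (inv_nonneg.mpr (norm_nonneg v)) v hv) (norm_smul_inv_norm hu0) (norm_smul_inv_norm hv0)
  rw [real_inner_smul_left, real_inner_smul_right, ← mul_assoc, ← mul_inv] at hunit
  have hpos : 0 < ‖u‖ * ‖v‖ := mul_pos (norm_pos_iff.mpr hu0) (norm_pos_iff.mpr hv0)
  rwa [inv_mul_le_iff₀ hpos, mul_comm] at hunit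

lemma sqrt_mul_norm_le_norm_add {β : ℝ} (hβ0 : 0 ≤ β) (hβ1 : β ≤ 1) {u v : E}
    (h : -⟪u, v⟫ ≤ (1 - β) * (‖u‖ * ‖v‖)) : √β * ‖u‖ ≤ ‖u + v‖ := by
  have hsq : β * ‖u‖ ^ 2 ≤ ‖u + v‖ ^ 2 := by
    rw [norm_add_sq_real]
    nlinarith [mul_nonneg (sub_nonneg.mpr hβ1) (sq_nonneg (‖u‖ - ‖v‖)),
      mul_nonneg hβ0 (sq_nonneg ‖v‖)]
  calc √β * ‖u‖ = √(β * ‖u‖ ^ 2) := by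
        rw [Real.sqrt_mul hβ0, Real.sqrt_sq (norm_nonneg u)]
    _ ≤ √(‖u + v‖ ^ 2) := Real.sqrt_le_sqrt hsq
    _ = ‖u + v‖ := Real.sqrt_sq (norm_nonneg _)

end InnerProduct

theorem stable_deconvolution_general {n k : ℕ} (A : Fin k → Set (EuclideanSpace ℝ (Fin n)))
    (xn xs : Fin k → EuclideanSpace ℝ (Fin n))
    (β : ℝ) (hβ : β ∈ Set.Ioc (0 : ℝ) 1)
    (hangle : ∀ i, ∀ u v, u ∈ -descCone (A i) (xn i) →
      v ∈ ∑ j ∈ Finset.univ.erase i, descCone (A j) (xn j) →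
      ‖u‖ = 1 → ‖v‖ = 1 → ⟪u, v⟫ ≤ 1 - β)
    (hmem : ∀ i, xs i - xn i ∈ descCone (A i) (xn i)) :
    ∀ i, ‖xs i - xn i‖ ≤ ‖∑ j, (xs j - xn j)‖ / Real.sqrt β := by
  intro i
  set ε : Fin k → EuclideanSpace ℝ (Fin n) := fun j => xs j - xn j
  have hsplit : ∑ j, ε j = ε i + ∑ j ∈ Finset.univ.erase i, ε j :=
    (Finset.add_sum_erase _ ε (Finset.mem_univ i)).symm
  have hrest : ∑ j ∈ Finset.univ.erase i, ε j ∈ ∑ j ∈ Finset.univ.erase i, descCone (A j) (xn j) :=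
    Set.finsetSum_mem_finsetSum _ _ _ fun j _ => hmem j
  have hinner := inner_le_mul_norm_mul_norm_of_forall_norm_eq_one
    (fun t ht x hx => by simpa [smul_neg] using descCone_smul_mem (Set.mem_neg.mp hx) ht)
    (fun t ht x hx => Set.smul_mem_finsetSum (fun j _ y hy => descCone_smul_mem hy ht) hx)
    (hangle i) (Set.neg_mem_neg.mpr (hmem i)) hrest
  rw [inner_neg_left, norm_neg] at hinner
  rw [le_div_iff₀ (Real.sqrt_pos.mpr hβ.1), mul_comm, hsplit]
  exact sqrt_mul_norm_le_norm_add hβ.1.le hβ.2 hinner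

/-- Stable deconvolution: under `β`-incoherence of the descent cones, each error
`‖xᵢ* − xᵢ♮‖` is bounded by `‖Σⱼ (xⱼ* − xⱼ♮)‖/√β`. -/
theorem stable_deconvolution {n k : ℕ} (A : Fin k → Set (EuclideanSpace ℝ (Fin n)))
    (hA : ∀ i, IsCompact (A i))
    (hA0 : ∀ i, (0 : EuclideanSpace ℝ (Fin n)) ∈ interior (A i))
    (xn xs : Fin k → EuclideanSpace ℝ (Fin n))
    (β : ℝ) (hβ : β ∈ Set.Ioc (0 : ℝ) 1)
    (hangle : ∀ i, ∀ u v, u ∈ -descCone (A i) (xn i) →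
      v ∈ ∑ j ∈ Finset.univ.erase i, descCone (A j) (xn j) →
      ‖u‖ = 1 → ‖v‖ = 1 → ⟪u, v⟫ ≤ 1 - β)
    (hmem : ∀ i, xs i - xn i ∈ descCone (A i) (xn i)) :
    ∀ i, ‖xs i - xn i‖ ≤ ‖∑ j, (xs j - xn j)‖ / Real.sqrt β :=
  stable_deconvolution_general A xn xs β hβ hangle hmem
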